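/- arXiv:1805.03585 — 2 statements merged into one kernel-verified Lean document; each statement's English description precedes it below -/
import Mathlib

section
/- Let F, F' : ℝ × ℝ^k → ℝ be generating functions with disjoint base supports, i.e. there are disjoint open intervals U, U' ⊂ ℝ such that for q outside U the fiber critical data of F over q agrees with that of the zero section, and similarly for F' outside U'. Then the function F # F' : (q, w, w') ↦ F(q,w) + F'(q,w') is a generating function whose contour, restricted over U, equals the contour of F restricted over U, and restricted over U', equals the contour of F' restricted over U'. -/
/-- The contour of `F : ℝ × W → ℝ` over the base ℝ, a subset of `J¹(ℝ)`. -/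
def contour1 {W : Type*} [NormedAddCommGroup W] [NormedSpace ℝ W]
    (F : ℝ → W → ℝ) : Set (ℝ × ℝ × ℝ) :=
  {x | ∃ w : W, fderiv ℝ (F x.2.1) w = 0 ∧ x.1 = F x.2.1 w ∧
      x.2.2 = deriv (fun q => F q w) x.2.1}

/-- Non-degenerate quadratic form. -/
def IsNondegQuadraticForm {V : Type*} [AddCommGroup V] [Module ℝ V] (Q : V → ℝ) : Prop :=
  ∃ B : V →ₗ[ℝ] V →ₗ[ℝ] ℝ, (∀ v w, B v w = B w v) ∧
    (∀ v, (∀ w, B v w = 0) → v = 0) ∧ ∀ v, Q v = B v v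


lemma quad_lemma {k : ℕ} {Q : (Fin k → ℝ) → ℝ}
    (hQ : ∃ B : (Fin k → ℝ) →ₗ[ℝ] (Fin k → ℝ) →ₗ[ℝ] ℝ, (∀ v w, B v w = B w v) ∧
      (∀ v, (∀ w, B v w = 0) → v = 0) ∧ ∀ v, Q v = B v v) :
    Q 0 = 0 ∧ ∀ x, (fderiv ℝ Q x = 0 ↔ x = 0) := by
  obtain ⟨B, hsymm, hnd, hBQ⟩ := hQ
  let b1 : (Fin k → ℝ) →ₗ[ℝ] ((Fin k → ℝ) →L[ℝ] ℝ) :=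
    { toFun := fun v => LinearMap.toContinuousLinearMap (B v)
      map_add' := by intro x y; ext z; simp
      map_smul' := by intro c x; ext z; simp }
  let b : (Fin k → ℝ) →L[ℝ] ((Fin k → ℝ) →L[ℝ] ℝ) := LinearMap.toContinuousLinearMap b1
  have hb : ∀ v w, b v w = B v w := fun v w => rfl
  have bilin : IsBoundedBilinearMap ℝ (fun p : (Fin k → ℝ) × (Fin k → ℝ) => b p.1 p.2) :=
    b.isBoundedBilinearMap
  have hder : ∀ x, HasFDerivAt Q
      ((bilin.deriv (x, x)).comp
        ((ContinuousLinearMap.id ℝ (Fin k → ℝ)).prod (ContinuousLinearMap.id ℝ (Fin k → ℝ)))) x := by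
    intro x
    have hdiag : HasFDerivAt (fun v : Fin k → ℝ => (v, v))
        ((ContinuousLinearMap.id ℝ (Fin k → ℝ)).prod (ContinuousLinearMap.id ℝ (Fin k → ℝ))) x :=
      HasFDerivAt.prodMk (hasFDerivAt_id x) (hasFDerivAt_id x)
    have := HasFDerivAt.comp (f := fun v : Fin k → ℝ => (v, v)) x (bilin.hasFDerivAt (x, x)) hdiag
    have hQe : Q = fun v => b v v := by funext v; rw [hBQ v]; rfl
    rw [hQe]; exact this
  have happ : ∀ x v, fderiv ℝ Q x v = B x v + B v x := by
    intro x v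
    rw [(hder x).fderiv]
    simp [bilin.deriv_apply, hb]
  constructor
  · rw [hBQ 0]; simp
  · intro x
    constructor
    · intro h
      apply hnd
      intro w
      have := happ x w
      rw [h] at this
      rw [hsymm w x] at this
      simp at this
      linarith [this]
    · rintro rfl
      ext v
      have := happ 0 v
      simpa using this

lemma sum_fderiv {k : ℕ} {f g : (Fin k → ℝ) → ℝ} (hf : Differentiable ℝ f)
    (hg : Differentiable ℝ g) (w : (Fin k → ℝ) × (Fin k → ℝ)) :
    fderiv ℝ (fun w : (Fin k → ℝ) × (Fin k → ℝ) => f w.1 + g w.2) w = 0 ↔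
      fderiv ℝ f w.1 = 0 ∧ fderiv ℝ g w.2 = 0 := by
  have h1 : HasFDerivAt (fun w : (Fin k → ℝ) × (Fin k → ℝ) => f w.1)
      ((fderiv ℝ f w.1).comp (ContinuousLinearMap.fst ℝ _ _)) w :=
    HasFDerivAt.comp (f := Prod.fst) w (hf w.1).hasFDerivAt (hasFDerivAt_fst)
  have h2 : HasFDerivAt (fun w : (Fin k → ℝ) × (Fin k → ℝ) => g w.2)
      ((fderiv ℝ g w.2).comp (ContinuousLinearMap.snd ℝ _ _)) w :=
    HasFDerivAt.comp (f := Prod.snd) w (hg w.2).hasFDerivAt (hasFDerivAt_snd)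
  have h3 : fderiv ℝ (fun w : (Fin k → ℝ) × (Fin k → ℝ) => f w.1 + g w.2) w = _ := (h1.add h2).fderiv
  rw [h3]
  constructor
  · intro h
    constructor
    · ext v
      have := congrArg (fun T => T (v, 0)) h
      simpa using this
    · ext v
      have := congrArg (fun T => T (0, v)) h
      simpa using this
  · rintro ⟨ha, hb⟩
    rw [ha, hb]
    ext v <;> simp

lemma helper_left {k : ℕ} {F F' : ℝ → (Fin k → ℝ) → ℝ}
    (hF : ContDiff ℝ (⊤ : ℕ∞) (Function.uncurry F)) (hF' : ContDiff ℝ (⊤ : ℕ∞) (Function.uncurry F'))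
    {Q' : (Fin k → ℝ) → ℝ}
    (hQ'0 : Q' 0 = 0) (hQ'c : ∀ x, (fderiv ℝ Q' x = 0 ↔ x = 0))
    {q : ℝ} (hev : ∀ᶠ q' in nhds q, ∀ w, F' q' w = Q' w) (u p : ℝ) :
    (u, q, p) ∈ contour1 (fun q (w : (Fin k → ℝ) × (Fin k → ℝ)) => F q w.1 + F' q w.2) ↔
    (u, q, p) ∈ contour1 F := by
  have hFd : ∀ q', Differentiable ℝ (F q') := fun q' =>
    (hF.differentiable (by simp)).comp (differentiable_const q' |>.prodMk differentiable_id)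
  have hF'd : ∀ q', Differentiable ℝ (F' q') := fun q' =>
    (hF'.differentiable (by simp)).comp (differentiable_const q' |>.prodMk differentiable_id)
  have hq : ∀ w, F' q w = Q' w := hev.self_of_nhds
  have hqfun : F' q = Q' := funext hq
  constructor
  · rintro ⟨w, hcrit, hu, hp⟩
    simp only at hcrit hu hp
    rw [sum_fderiv (hFd q) (hF'd q)] at hcrit
    obtain ⟨hc1, hc2⟩ := hcrit
    rw [hqfun] at hc2
    have hw2 : w.2 = 0 := (hQ'c w.2).mp hc2
    refine ⟨w.1, hc1, ?_, ?_⟩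
    · rw [hu, hw2, hq 0, hQ'0, add_zero]
    · rw [hp, hw2]
      have heq : (fun q' => F q' w.1 + F' q' 0) =ᶠ[nhds q] fun q' => F q' w.1 := by
        filter_upwards [hev] with q' hq'
        rw [hq' 0, hQ'0, add_zero]
      rw [heq.deriv_eq]
  · rintro ⟨w, hcrit, hu, hp⟩
    simp only at hcrit hu hp
    refine ⟨(w, 0), ?_, ?_, ?_⟩
    · rw [sum_fderiv (hFd q) (hF'd q)]
      refine ⟨hcrit, ?_⟩
      rw [hqfun]
      exact (hQ'c 0).mpr rfl
    · simp only
      rw [hq 0, hQ'0, add_zero]; exact hu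
    · simp only
      have heq : (fun q' => F q' w + F' q' 0) =ᶠ[nhds q] fun q' => F q' w := by
        filter_upwards [hev] with q' hq'
        rw [hq' 0, hQ'0, add_zero]
      rw [heq.deriv_eq]; exact hp

lemma helper_right {k : ℕ} {F F' : ℝ → (Fin k → ℝ) → ℝ}
    (hF : ContDiff ℝ (⊤ : ℕ∞) (Function.uncurry F)) (hF' : ContDiff ℝ (⊤ : ℕ∞) (Function.uncurry F'))
    {Q : (Fin k → ℝ) → ℝ}
    (hQ0 : Q 0 = 0) (hQc : ∀ x, (fderiv ℝ Q x = 0 ↔ x = 0))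
    {q : ℝ} (hev : ∀ᶠ q' in nhds q, ∀ w, F q' w = Q w) (u p : ℝ) :
    (u, q, p) ∈ contour1 (fun q (w : (Fin k → ℝ) × (Fin k → ℝ)) => F q w.1 + F' q w.2) ↔
    (u, q, p) ∈ contour1 F' := by
  have hFd : ∀ q', Differentiable ℝ (F q') := fun q' =>
    (hF.differentiable (by simp)).comp (differentiable_const q' |>.prodMk differentiable_id)
  have hF'd : ∀ q', Differentiable ℝ (F' q') := fun q' =>
    (hF'.differentiable (by simp)).comp (differentiable_const q' |>.prodMk differentiable_id)
  have hq : ∀ w, F q w = Q w := hev.self_of_nhds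
  have hqfun : F q = Q := funext hq
  constructor
  · rintro ⟨w, hcrit, hu, hp⟩
    simp only at hcrit hu hp
    rw [sum_fderiv (hFd q) (hF'd q)] at hcrit
    obtain ⟨hc1, hc2⟩ := hcrit
    rw [hqfun] at hc1
    have hw1 : w.1 = 0 := (hQc w.1).mp hc1
    refine ⟨w.2, hc2, ?_, ?_⟩
    · rw [hu, hw1, hq 0, hQ0, zero_add]
    · rw [hp, hw1]
      have heq : (fun q' => F q' 0 + F' q' w.2) =ᶠ[nhds q] fun q' => F' q' w.2 := by
        filter_upwards [hev] with q' hq'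
        rw [hq' 0, hQ0, zero_add]
      rw [heq.deriv_eq]
  · rintro ⟨w, hcrit, hu, hp⟩
    simp only at hcrit hu hp
    refine ⟨(0, w), ?_, ?_, ?_⟩
    · rw [sum_fderiv (hFd q) (hF'd q)]
      refine ⟨?_, hcrit⟩
      rw [hqfun]
      exact (hQc 0).mpr rfl
    · simp only
      rw [hq 0, hQ0, zero_add]; exact hu
    · simp only
      have heq : (fun q' => F q' 0 + F' q' w) =ᶠ[nhds q] fun q' => F' q' w := by
        filter_upwards [hev] with q' hq'
        rw [hq' 0, hQ0, zero_add]
      rw [heq.deriv_eq]; exact hp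

/- STATEMENT 9: Connected sum of generating functions with disjoint base supports.
If `F` and `F'` are quadratic at infinity, equal to their quadratic parts `Q`, `Q'`
outside disjoint open intervals `U`, `U'` of the base (so their contours `L`, `L'`
agree with the zero section outside `U`, resp. `U'`), then
`F # F' : (q,w,w') ↦ F(q,w) + F'(q,w')` is a generating function whose contour over
`U` equals `L` over `U`, and over `U'` equals `L'` over `U'`. -/

theorem connected_sum_contour (k : ℕ)
    (F F' : ℝ → (Fin k → ℝ) → ℝ)
    (hF : ContDiff ℝ (⊤ : ℕ∞) (Function.uncurry F))
    (hF' : ContDiff ℝ (⊤ : ℕ∞) (Function.uncurry F'))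
    (Q Q' : (Fin k → ℝ) → ℝ)
    (hQ : IsNondegQuadraticForm Q) (hQ' : IsNondegQuadraticForm Q')
    (U U' : Set ℝ)
    (hU : ∃ a b : ℝ, a < b ∧ U = Set.Ioo a b)
    (hU' : ∃ a b : ℝ, a < b ∧ U' = Set.Ioo a b)
    (hdisj : Disjoint U U')
    (hFQ : ∀ q ∉ U, ∀ w, F q w = Q w)
    (hF'Q' : ∀ q ∉ U', ∀ w, F' q w = Q' w)
    (L L' : Set (ℝ × ℝ × ℝ))
    (hL : contour1 F = L) (hL' : contour1 F' = L') :
    (∀ q ∈ U, ∀ u p : ℝ,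
      ((u, q, p) ∈ contour1
        (fun q (w : (Fin k → ℝ) × (Fin k → ℝ)) => F q w.1 + F' q w.2)) ↔ (u, q, p) ∈ L) ∧
    (∀ q ∈ U', ∀ u p : ℝ,
      ((u, q, p) ∈ contour1
        (fun q (w : (Fin k → ℝ) × (Fin k → ℝ)) => F q w.1 + F' q w.2)) ↔ (u, q, p) ∈ L') := by
  obtain ⟨hQ0, hQc⟩ := quad_lemma hQ
  obtain ⟨hQ'0, hQ'c⟩ := quad_lemma hQ'
  have hUo : IsOpen U := by obtain ⟨a, b, -, rfl⟩ := hU; exact isOpen_Ioo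
  have hU'o : IsOpen U' := by obtain ⟨a, b, -, rfl⟩ := hU'; exact isOpen_Ioo
  constructor
  · intro q hq u p
    rw [← hL]
    have hev : ∀ᶠ q' in nhds q, ∀ w, F' q' w = Q' w := by
      filter_upwards [hUo.mem_nhds hq] with q' hq'
      exact hF'Q' q' (Set.disjoint_left.mp hdisj hq')
    exact helper_left hF hF' hQ'0 hQ'c hev u p
  · intro q hq u p
    rw [← hL']
    have hev : ∀ᶠ q' in nhds q, ∀ w, F q' w = Q w := by
      filter_upwards [hU'o.mem_nhds hq] with q' hq'
      exact hFQ q' (Set.disjoint_right.mp hdisj hq')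
    exact helper_right hF hF' hQ0 hQc hev u p
end

section
/- Define F_t : ℝ × (ℝ^k × ℝ^k) → ℝ for t ∈ [0,1] by F_t(q,w,w̄) = f(−q, cos(πt/2)·w + sin(πt/2)·w̄) + f(q,w) + Q(w) + Q(w̄), where f : ℝ × ℝ^k → ℝ is smooth with support contained in {q > 0} × ℝ^k and Q is a non-degenerate quadratic form on ℝ^k. Then the contour of F_t in J¹(ℝ) is independent of t: for all t ∈ [0,1], contour(F_t) = contour(F₀). -/
/- STATEMENT 13: The path of generating functions
`F_t(q,w,w̄) = f(−q, cos(πt/2)·w + sin(πt/2)·w̄) + f(q,w) + Q(w) + Q(w̄)`,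
for `f` smooth with support in `{q > 0} × ℝ^k` and `Q` a non-degenerate quadratic
form, has constant contour in `J¹(ℝ)`: for all `t ∈ [0,1]`,
`contour (F_t) = contour (F₀)`. -/

section Aux

set_option linter.unreachableTactic false
set_option linter.unusedTactic false

variable {V : Type*} [NormedAddCommGroup V] [NormedSpace ℝ V] [FiniteDimensional ℝ V]

/-- A bilinear form on a finite-dimensional space as a continuous bilinear map. -/
noncomputable def bilC (B : V →ₗ[ℝ] V →ₗ[ℝ] ℝ) : V →L[ℝ] V →L[ℝ] ℝ :=
  LinearMap.toContinuousLinearMap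
    { toFun := fun v => LinearMap.toContinuousLinearMap (B v)
      map_add' := fun a b => by ext w; simp
      map_smul' := fun a b => by ext w; simp }

@[simp] lemma bilC_apply (B : V →ₗ[ℝ] V →ₗ[ℝ] ℝ) (v w : V) : bilC B v w = B v w := by
  simp [bilC]

lemma quad_hasFDerivAt (B : V →ₗ[ℝ] V →ₗ[ℝ] ℝ) (hsym : ∀ v w, B v w = B w v) (w : V) :
    HasFDerivAt (fun v => (B v v : ℝ)) ((2 : ℝ) • bilC B w) w := by
  have h1 := ((bilC B).isBoundedBilinearMap).hasFDerivAt (w, w)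
  have h2 : HasFDerivAt (fun v : V => (v, v))
      ((ContinuousLinearMap.id ℝ V).prod (ContinuousLinearMap.id ℝ V)) w :=
    ((ContinuousLinearMap.id ℝ V).prod (ContinuousLinearMap.id ℝ V)).hasFDerivAt
  have h3 : HasFDerivAt ((fun p : V × V => bilC B p.1 p.2) ∘ fun v : V => (v, v))
      (((bilC B).isBoundedBilinearMap.deriv (w, w)).comp
        ((ContinuousLinearMap.id ℝ V).prod (ContinuousLinearMap.id ℝ V))) w := by
    exact HasFDerivAt.comp (f := fun v : V => (v, v)) w h1 h2
  have hfun : ((fun p : V × V => bilC B p.1 p.2) ∘ fun v : V => (v, v))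
      = fun v => (B v v : ℝ) := by
    funext v; simp
  rw [hfun] at h3
  refine HasFDerivAt.congr_fderiv h3 ?_
  ext v
  simp [IsBoundedBilinearMap.deriv_apply, hsym v w, two_mul]

lemma quadPair_hasFDerivAt (B : V →ₗ[ℝ] V →ₗ[ℝ] ℝ) (hsym : ∀ v w, B v w = B w v)
    (z : V × V) :
    HasFDerivAt (fun y : V × V => (B y.1 y.1 + B y.2 y.2 : ℝ))
      ((((2 : ℝ) • bilC B z.1).comp (ContinuousLinearMap.fst ℝ V V)) +
        (((2 : ℝ) • bilC B z.2).comp (ContinuousLinearMap.snd ℝ V V))) z := by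
  have h1 : HasFDerivAt ((fun v => (B v v : ℝ)) ∘ (Prod.fst : V × V → V))
      (((2 : ℝ) • bilC B z.1).comp (ContinuousLinearMap.fst ℝ V V)) z := by
    exact HasFDerivAt.comp (f := (Prod.fst : V × V → V)) z
      (quad_hasFDerivAt B hsym z.1) hasFDerivAt_fst
  have h2 : HasFDerivAt ((fun v => (B v v : ℝ)) ∘ (Prod.snd : V × V → V))
      (((2 : ℝ) • bilC B z.2).comp (ContinuousLinearMap.snd ℝ V V)) z := by
    exact HasFDerivAt.comp (f := (Prod.snd : V × V → V)) z
      (quad_hasFDerivAt B hsym z.2) hasFDerivAt_snd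
  exact h1.add h2

lemma quadPair_crit (B : V →ₗ[ℝ] V →ₗ[ℝ] ℝ) (hsym : ∀ v w, B v w = B w v)
    (hnd : ∀ v, (∀ w, B v w = 0) → v = 0) (z : V × V)
    (hz : fderiv ℝ (fun y : V × V => (B y.1 y.1 + B y.2 y.2 : ℝ)) z = 0) : z = 0 := by
  have hD := (quadPair_hasFDerivAt B hsym z).fderiv
  rw [hz] at hD
  have key : ∀ v : V × V, (2 : ℝ) * B z.1 v.1 + (2 : ℝ) * B z.2 v.2 = 0 := by
    intro v
    have h0 := congrArg (fun T : (V × V) →L[ℝ] ℝ => T v) hD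
    simpa [ContinuousLinearMap.add_apply, ContinuousLinearMap.comp_apply,
      ContinuousLinearMap.smul_apply, smul_eq_mul] using h0.symm
  have h1 : z.1 = 0 := by
    refine hnd z.1 fun w => ?_
    have := key (w, 0)
    simp at this
    linarith
  have h2 : z.2 = 0 := by
    refine hnd z.2 fun w => ?_
    have := key (0, w)
    simp at this
    linarith
  exact Prod.ext h1 h2

/-- Rotation by `(c, s)` with `c² + s² = 1` on `V × V`, as a continuous linear equiv. -/
noncomputable def rotCLE (c s : ℝ) (h : c ^ 2 + s ^ 2 = 1) : (V × V) ≃L[ℝ] V × V :=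
  LinearEquiv.toContinuousLinearEquiv
    { toFun := fun z => (c • z.1 + s • z.2, -s • z.1 + c • z.2)
      invFun := fun z => (c • z.1 - s • z.2, s • z.1 + c • z.2)
      map_add' := fun a b => by
        ext <;> simp [smul_add] <;> abel
      map_smul' := fun m a => by
        ext <;> simp [smul_comm m]
      left_inv := fun z => by
        ext <;> simp only [smul_add, smul_sub, smul_smul, smul_neg, neg_smul] <;>
          match_scalars <;> first | ring1 | linear_combination h | linear_combination -h
      right_inv := fun z => by
        ext <;> simp only [smul_add, smul_sub, smul_smul, smul_neg, neg_smul] <;>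
          match_scalars <;> first | ring1 | linear_combination h | linear_combination -h }

lemma rotCLE_apply (c s : ℝ) (h : c ^ 2 + s ^ 2 = 1) (z : V × V) :
    rotCLE c s h z = (c • z.1 + s • z.2, -s • z.1 + c • z.2) := by
  simp [rotCLE, LinearEquiv.coe_toContinuousLinearEquiv']

end Aux

/-- rotation invariance of `Q ⊕ Q` -/
lemma rotQ_inv {V : Type*} [AddCommGroup V] [Module ℝ V] (B : V →ₗ[ℝ] V →ₗ[ℝ] ℝ)
    (Q : V → ℝ) (hBQ : ∀ v, Q v = B v v) (c s : ℝ) (h : c ^ 2 + s ^ 2 = 1) (a b : V) :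
    Q (c • a + s • b) + Q (-s • a + c • b) = Q a + Q b := by
  simp only [hBQ, map_add, map_smul, LinearMap.add_apply, LinearMap.smul_apply,
    map_neg, neg_smul, LinearMap.neg_apply, smul_eq_mul]
  linear_combination (B a a + B b b) * h

theorem contour_incl {V : Type*} [NormedAddCommGroup V] [NormedSpace ℝ V]
    [FiniteDimensional ℝ V]
    (f : ℝ × V → ℝ) (hf : ContDiff ℝ (⊤ : ℕ∞) f)
    (hfsupp : ∀ q ≤ (0 : ℝ), ∀ w, f (q, w) = 0)
    (Q : V → ℝ) (hQ : IsNondegQuadraticForm Q)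
    (c s c' s' : ℝ) (h : c ^ 2 + s ^ 2 = 1) (h' : c' ^ 2 + s' ^ 2 = 1) :
    contour1 (fun q (w : V × V) => f (-q, c • w.1 + s • w.2) + f (q, w.1) + Q w.1 + Q w.2) ⊆
      contour1 (fun q (w : V × V) =>
        f (-q, c' • w.1 + s' • w.2) + f (q, w.1) + Q w.1 + Q w.2) := by
  obtain ⟨B, hsym, hnd, hBQ⟩ := hQ
  set F : ℝ → V × V → ℝ :=
    fun q w => f (-q, c • w.1 + s • w.2) + f (q, w.1) + Q w.1 + Q w.2 with hFdef
  set F' : ℝ → V × V → ℝ :=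
    fun q w => f (-q, c' • w.1 + s' • w.2) + f (q, w.1) + Q w.1 + Q w.2 with hF'def
  have hQd : Differentiable ℝ Q := by
    have h0 : Q = fun v => (B v v : ℝ) := funext fun v => hBQ v
    rw [h0]
    exact fun v => (quad_hasFDerivAt B hsym v).differentiableAt
  have hfd : Differentiable ℝ f := hf.differentiable (by simp)
  have hdiffF' : ∀ q, Differentiable ℝ (F' q) := by
    intro q
    exact ((((hfd.comp (Differentiable.prodMk (differentiable_const _) ((differentiable_fst.const_smul c').add
      (differentiable_snd.const_smul s')))).add
      (hfd.comp (Differentiable.prodMk (differentiable_const _) differentiable_fst))).add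
      (hQd.comp differentiable_fst)).add (hQd.comp differentiable_snd))
  rintro ⟨u, q, p⟩ hx
  simp only [contour1, Set.mem_setOf_eq] at hx ⊢
  obtain ⟨z, hcrit, hval, hder⟩ := hx
  rcases lt_trichotomy q 0 with hq | hq | hq
  · -- q < 0 : rotate the witness
    have h'' : c' ^ 2 + (-s') ^ 2 = 1 := by rw [neg_pow]; simpa using h'
    set L : (V × V) ≃L[ℝ] V × V := (rotCLE c s h).trans (rotCLE c' (-s') h'') with hLdef
    have hLy : ∀ y : V × V, L y =
        (c' • (c • y.1 + s • y.2) + -s' • (-s • y.1 + c • y.2),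
          - -s' • (c • y.1 + s • y.2) + c' • (-s • y.1 + c • y.2)) := by
      intro y
      rw [hLdef, ContinuousLinearEquiv.trans_apply, rotCLE_apply, rotCLE_apply]
    have hcomb : ∀ u1 u2 : V,
        c' • (c' • u1 + -s' • u2) + s' • (- -s' • u1 + c' • u2) = u1 := by
      intro u1 u2
      simp only [smul_add, smul_smul, neg_smul, neg_neg, smul_neg]
      match_scalars <;> first | ring1 | linear_combination h' | linear_combination -h'
    have hfun : ∀ q' ≤ (0 : ℝ), ∀ y : V × V, F q' y = F' q' (L y) := by
      intro q' hq' y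
      have hQQ : Q (c' • (c • y.1 + s • y.2) + -s' • (-s • y.1 + c • y.2)) +
          Q (- -s' • (c • y.1 + s • y.2) + c' • (-s • y.1 + c • y.2)) =
          Q y.1 + Q y.2 :=
        (rotQ_inv B Q hBQ c' (-s') h'' _ _).trans (rotQ_inv B Q hBQ c s h y.1 y.2)
      simp only [hFdef, hF'def, hLy y]
      rw [hcomb, hfsupp q' hq', hfsupp q' hq']
      linarith [hQQ]
    refine ⟨L z, ?_, ?_, ?_⟩
    · have hD : HasFDerivAt (F' q) (fderiv ℝ (F' q) (L z)) (L z) :=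
        (hdiffF' q (L z)).hasFDerivAt
      have hcomp : HasFDerivAt (F' q ∘ ⇑L)
          ((fderiv ℝ (F' q) (L z)).comp (L : (V × V) →L[ℝ] V × V)) z := by
        exact hD.comp z L.hasFDerivAt
      have hfeq : F q = F' q ∘ ⇑L := funext fun y => hfun q hq.le y
      rw [← hfeq] at hcomp
      have h0 : (fderiv ℝ (F' q) (L z)).comp (L : (V × V) →L[ℝ] V × V) = 0 := by
        rw [← hcomp.fderiv]; exact hcrit
      refine ContinuousLinearMap.ext fun v => ?_
      have h1 := congrArg (fun T : (V × V) →L[ℝ] ℝ => T (L.symm v)) h0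
      simpa using h1
    · rw [hval]; exact hfun q hq.le z
    · have hev : (fun q' => F' q' (L z)) =ᶠ[nhds q] fun q' => F q' z := by
        filter_upwards [Iio_mem_nhds hq] with q' hq'
        exact (hfun q' (le_of_lt hq') z).symm
      rw [hev.deriv_eq]; exact hder
  · -- q = 0 : the only critical point is the origin
    subst hq
    have hfunc : F 0 = fun y : V × V => (B y.1 y.1 + B y.2 y.2 : ℝ) := by
      funext y
      simp only [hFdef, neg_zero]
      rw [hfsupp 0 le_rfl, hfsupp 0 le_rfl, hBQ, hBQ]
      ring
    have hfunc' : F' 0 = fun y : V × V => (B y.1 y.1 + B y.2 y.2 : ℝ) := by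
      funext y
      simp only [hF'def, neg_zero]
      rw [hfsupp 0 le_rfl, hfsupp 0 le_rfl, hBQ, hBQ]
      ring
    rw [hfunc] at hcrit hval
    have hz0 : z = 0 := quadPair_crit B hsym hnd z hcrit
    rw [hz0] at hcrit hval hder
    refine ⟨0, ?_, ?_, ?_⟩
    · rw [hfunc']; exact hcrit
    · rw [hfunc']; exact hval
    · have : (fun q' => F q' 0) = fun q' => F' q' 0 := by
        funext q'
        simp only [hFdef, hF'def, Prod.fst_zero, Prod.snd_zero, smul_zero, add_zero]
      rw [← this]; exact hder
  · -- q > 0 : the two functions agree near q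
    have hfun : ∀ q' ∈ Set.Ioi (0 : ℝ), ∀ y : V × V, F q' y = F' q' y := by
      intro q' hq' y
      simp only [hFdef, hF'def]
      rw [hfsupp (-q') (by simp at hq'; linarith), hfsupp (-q') (by simp at hq'; linarith)]
    refine ⟨z, ?_, ?_, ?_⟩
    · have : F' q = F q := funext fun y => (hfun q hq y).symm
      rw [this]; exact hcrit
    · rw [hval]; exact hfun q hq z
    · have hev : (fun q' => F' q' z) =ᶠ[nhds q] fun q' => F q' z := by
        filter_upwards [Ioi_mem_nhds hq] with q' hq'
        exact (hfun q' hq' z).symm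
      rw [hev.deriv_eq]; exact hder

theorem constant_contour_path (k : ℕ)
    (f : ℝ × (Fin k → ℝ) → ℝ)
    (hf : ContDiff ℝ (⊤ : ℕ∞) f) (hfc : HasCompactSupport f)
    (hfsupp : ∀ q ≤ (0 : ℝ), ∀ w, f (q, w) = 0)
    (Q : (Fin k → ℝ) → ℝ) (hQ : IsNondegQuadraticForm Q) :
    ∀ t ∈ Set.Icc (0 : ℝ) 1,
      contour1 (fun q (w : (Fin k → ℝ) × (Fin k → ℝ)) =>
        f (-q, Real.cos (Real.pi * t / 2) • w.1 + Real.sin (Real.pi * t / 2) • w.2) +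
          f (q, w.1) + Q w.1 + Q w.2) =
      contour1 (fun q (w : (Fin k → ℝ) × (Fin k → ℝ)) =>
        f (-q, Real.cos (Real.pi * 0 / 2) • w.1 + Real.sin (Real.pi * 0 / 2) • w.2) +
          f (q, w.1) + Q w.1 + Q w.2) := by
  intro t _
  have h1 : Real.cos (Real.pi * t / 2) ^ 2 + Real.sin (Real.pi * t / 2) ^ 2 = 1 :=
    Real.cos_sq_add_sin_sq _
  have h0 : Real.cos (Real.pi * 0 / 2) ^ 2 + Real.sin (Real.pi * 0 / 2) ^ 2 = 1 :=
    Real.cos_sq_add_sin_sq _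
  exact Set.Subset.antisymm
    (contour_incl f hf hfsupp Q hQ _ _ _ _ h1 h0)
    (contour_incl f hf hfsupp Q hQ _ _ _ _ h0 h1)
end
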